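/- Let d > 1 be a cube-free integer, L = ℚ(∛d) with ∛d the real cube root, and let η be a unit of the ring of integers O_L with η > 0. Then there is no nonzero β ∈ O_L with 0 ≤ β < η and 0 ≤ β'β'' < η'η'', where β', β'' denote the two complex conjugates of β; i.e., every positive unit of O_L is a lattice minimum. -/

import Mathlib

open Polynomial IntermediateField

set_option maxHeartbeats 1000000

theorem aux4 (d : ℤ) (hd : 1 < d) (hcf : ∀ p : ℤ, Prime p → ¬ (p ^ 3 ∣ d))
    (c : ℝ) (hc3 : c ^ (3 : ℕ) = (d : ℝ))
    (σ : (adjoin ℚ {c} : IntermediateField ℚ ℝ) →ₐ[ℚ] ℂ)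
    (hσ : ∃ x : (adjoin ℚ {c} : IntermediateField ℚ ℝ), (σ x).im ≠ 0)
    (η : integralClosure ℤ (adjoin ℚ {c} : IntermediateField ℚ ℝ)) (hunit : IsUnit η)
    (hpos : (0 : ℝ) < ((η : (adjoin ℚ {c} : IntermediateField ℚ ℝ)) : ℝ))
    (β : integralClosure ℤ (adjoin ℚ {c} : IntermediateField ℚ ℝ))
    (hβ0 : (0 : ℝ) ≤ ((β : (adjoin ℚ {c} : IntermediateField ℚ ℝ)) : ℝ))
    (hβh : ((β : (adjoin ℚ {c} : IntermediateField ℚ ℝ)) : ℝ) <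
      ((η : (adjoin ℚ {c} : IntermediateField ℚ ℝ)) : ℝ))
    (hβr : Complex.normSq (σ (β : (adjoin ℚ {c} : IntermediateField ℚ ℝ))) <
      Complex.normSq (σ (η : (adjoin ℚ {c} : IntermediateField ℚ ℝ)))) :
    β = 0 := by
  have hd0 : (0 : ℝ) < (d : ℝ) := by exact_mod_cast lt_trans one_pos hd
  -- d is not a cube in ℚ
  have hnc : ∀ b : ℚ, b ^ 3 ≠ (d : ℚ) := by
    intro b hb
    have hbint : IsIntegral ℤ b := by
      refine ⟨X ^ 3 - C (d : ℤ), monic_X_pow_sub_C _ (by norm_num), ?_⟩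
      have h : (aeval b) ((X:ℤ[X]) ^ 3 - C (d : ℤ)) = 0 := by
        rw [map_sub, map_pow, aeval_X, aeval_C]
        simp [hb]
      exact h
    obtain ⟨m, hm⟩ := IsIntegrallyClosed.isIntegral_iff.mp hbint
    have hm3 : m ^ 3 = d := by
      have h2 : ((m : ℚ)) ^ 3 = ((d : ℚ)) := by rw [show ((m:ℚ)) = b from by exact_mod_cast hm, hb]
      exact_mod_cast h2
    have hm1 : 1 < m := by nlinarith [sq_nonneg m, sq_nonneg (m - 1), sq_nonneg (m + 1)]
    obtain ⟨p, hp, hpd⟩ := Int.exists_prime_and_dvd (n := m) (by omega)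
    exact hcf p hp (hm3 ▸ pow_dvd_pow_of_dvd hpd 3)
  have hirr : Irreducible (X ^ 3 - C (d : ℚ)) :=
    X_pow_sub_C_irreducible_of_prime Nat.prime_three hnc
  have haev : aeval c (X ^ 3 - C (d : ℚ)) = 0 := by
    rw [map_sub, map_pow, aeval_X, aeval_C]
    simp [hc3]
  have hint : IsIntegral ℚ c :=
    ⟨X ^ 3 - C (d : ℚ), monic_X_pow_sub_C _ (by norm_num), by
      rw [← aeval_def]; exact haev⟩
  have hmin : minpoly ℚ c = X ^ 3 - C (d : ℚ) :=
    (minpoly.eq_of_irreducible_of_monic hirr haev (monic_X_pow_sub_C _ (by norm_num))).symm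
  haveI : FiniteDimensional ℚ (adjoin ℚ {c} : IntermediateField ℚ ℝ) :=
    IntermediateField.adjoin.finiteDimensional hint
  have hfr : Module.finrank ℚ (adjoin ℚ {c} : IntermediateField ℚ ℝ) = 3 := by
    have := IntermediateField.adjoin.finrank hint
    rw [hmin, natDegree_X_pow_sub_C] at this
    exact this
  -- the three embeddings of ℚ⟮c⟯ into ℂ
  let ι : (adjoin ℚ {c} : IntermediateField ℚ ℝ) →ₐ[ℚ] ℂ :=
    (Complex.ofRealHom.comp (algebraMap (adjoin ℚ {c} : IntermediateField ℚ ℝ) ℝ)).toRatAlgHom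
  let σ' : (adjoin ℚ {c} : IntermediateField ℚ ℝ) →ₐ[ℚ] ℂ :=
    ((starRingEnd ℂ).comp (σ : (adjoin ℚ {c} : IntermediateField ℚ ℝ) →+* ℂ)).toRatAlgHom
  have hι : ∀ x : (adjoin ℚ {c} : IntermediateField ℚ ℝ), ι x = ((x : ℝ) : ℂ) := fun _ => rfl
  have hσ' : ∀ x : (adjoin ℚ {c} : IntermediateField ℚ ℝ), σ' x = (starRingEnd ℂ) (σ x) :=
    fun _ => rfl
  obtain ⟨x0, hx0⟩ := hσ
  have hne1 : ι ≠ σ := by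
    intro h
    apply hx0
    rw [← h, hι]
    exact Complex.ofReal_im _
  have hne2 : ι ≠ σ' := by
    intro h
    apply hx0
    have := congrArg (fun f : _ →ₐ[ℚ] ℂ => (f x0).im) h
    simp only [hι, hσ', Complex.ofReal_im, Complex.conj_im] at this
    linarith
  have hne3 : σ ≠ σ' := by
    intro h
    apply hx0
    have := congrArg (fun f : _ →ₐ[ℚ] ℂ => (f x0).im) h
    simp only [hσ', Complex.conj_im] at this
    linarith
  have hcard : Fintype.card ((adjoin ℚ {c} : IntermediateField ℚ ℝ) →ₐ[ℚ] ℂ) = 3 := by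
    rw [AlgHom.card]; exact hfr
  haveI := Classical.decEq ((adjoin ℚ {c} : IntermediateField ℚ ℝ) →ₐ[ℚ] ℂ)
  have hι'' : ι ∉ ({σ, σ'} : Finset _) := by
    simp [hne1, hne2]
  have hσσ' : σ ∉ ({σ'} : Finset _) := by simp [hne3]
  have huniv : (Finset.univ : Finset ((adjoin ℚ {c} : IntermediateField ℚ ℝ) →ₐ[ℚ] ℂ))
      = {ι, σ, σ'} := by
    symm
    apply Finset.eq_univ_of_card
    rw [hcard, Finset.card_insert_of_notMem hι'', Finset.card_insert_of_notMem hσσ',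
      Finset.card_singleton]
  have key : ∀ x : (adjoin ℚ {c} : IntermediateField ℚ ℝ),
      ((Algebra.norm ℚ x : ℚ) : ℝ) = (x : ℝ) * Complex.normSq (σ x) := by
    intro x
    apply Complex.ofReal_injective
    have h1 := Algebra.norm_eq_prod_embeddings ℚ ℂ x
    rw [huniv, Finset.prod_insert hι'', Finset.prod_insert hσσ', Finset.prod_singleton] at h1
    rw [hι, hσ', Complex.mul_conj] at h1
    rw [show ((((Algebra.norm ℚ) x : ℚ) : ℝ) : ℂ) = algebraMap ℚ ℂ ((Algebra.norm ℚ) x) by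
      push_cast; rfl, h1]
    push_cast
    ring
  have hZ : ∀ x : integralClosure ℤ (adjoin ℚ {c} : IntermediateField ℚ ℝ),
      ∃ n : ℤ, (n : ℚ) = Algebra.norm ℚ (x : (adjoin ℚ {c} : IntermediateField ℚ ℝ)) :=
    fun x => IsIntegrallyClosed.isIntegral_iff.mp (Algebra.isIntegral_norm ℚ x.2)
  obtain ⟨nβ, hnβ⟩ := hZ β
  obtain ⟨nη, hnη⟩ := hZ η
  -- the norm of η is 1
  obtain ⟨u, hu⟩ := hunit
  obtain ⟨nζ, hnζ⟩ := hZ ((u⁻¹ : _ˣ) : integralClosure ℤ (adjoin ℚ {c} : IntermediateField ℚ ℝ))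
  have hmul : ((η : (adjoin ℚ {c} : IntermediateField ℚ ℝ))) *
      (((u⁻¹ : _ˣ) : integralClosure ℤ (adjoin ℚ {c} : IntermediateField ℚ ℝ)) :
        (adjoin ℚ {c} : IntermediateField ℚ ℝ)) = 1 := by
    have h2 : (u : integralClosure ℤ (adjoin ℚ {c} : IntermediateField ℚ ℝ)) *
        ((u⁻¹ : _ˣ) : integralClosure ℤ (adjoin ℚ {c} : IntermediateField ℚ ℝ)) = 1 :=
      u.mul_inv
    rw [hu] at h2
    exact_mod_cast congrArg
      (fun z : integralClosure ℤ (adjoin ℚ {c} : IntermediateField ℚ ℝ) =>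
        (z : (adjoin ℚ {c} : IntermediateField ℚ ℝ))) h2
  have hnn : (nη : ℚ) * (nζ : ℚ) = 1 := by
    rw [hnη, hnζ, ← map_mul, hmul, map_one]
  have hηK0 : ((η : (adjoin ℚ {c} : IntermediateField ℚ ℝ)) : ℝ) ≠ 0 := ne_of_gt hpos
  have hηK0' : (η : (adjoin ℚ {c} : IntermediateField ℚ ℝ)) ≠ 0 := by
    intro h; apply hηK0; rw [h]; rfl
  have hσne : σ (η : (adjoin ℚ {c} : IntermediateField ℚ ℝ)) ≠ 0 := by
    intro h
    exact hηK0' (map_eq_zero_iff σ (RingHom.injective _)|>.mp h)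
  have hnsη : 0 < Complex.normSq (σ (η : (adjoin ℚ {c} : IntermediateField ℚ ℝ))) :=
    Complex.normSq_pos.mpr hσne
  have hnηpos : (0 : ℝ) < (nη : ℝ) := by
    have := key (η : (adjoin ℚ {c} : IntermediateField ℚ ℝ))
    rw [← hnη] at this
    push_cast at this
    rw [this]
    exact mul_pos hpos hnsη
  have hnη1 : nη = 1 := by
    have hint' : nη * nζ = 1 := by exact_mod_cast hnn
    rcases Int.isUnit_iff.mp (IsUnit.of_mul_eq_one _ hint') with h | h
    · exact h
    · rw [h] at hnηpos; norm_num at hnηpos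
  -- bounds on the norm of β
  have hkβ : (nβ : ℝ) = ((β : (adjoin ℚ {c} : IntermediateField ℚ ℝ)) : ℝ) *
      Complex.normSq (σ (β : (adjoin ℚ {c} : IntermediateField ℚ ℝ))) := by
    have := key (β : (adjoin ℚ {c} : IntermediateField ℚ ℝ))
    rw [← hnβ] at this
    push_cast at this
    exact this
  have hkη : (1 : ℝ) = ((η : (adjoin ℚ {c} : IntermediateField ℚ ℝ)) : ℝ) *
      Complex.normSq (σ (η : (adjoin ℚ {c} : IntermediateField ℚ ℝ))) := by
    have := key (η : (adjoin ℚ {c} : IntermediateField ℚ ℝ))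
    rw [← hnη, hnη1] at this
    push_cast at this
    exact this
  have hb1 : (0 : ℝ) ≤ (nβ : ℝ) := by
    rw [hkβ]; exact mul_nonneg hβ0 (Complex.normSq_nonneg _)
  have hb2 : (nβ : ℝ) < 1 := by
    rw [hkβ, hkη]
    calc ((β : (adjoin ℚ {c} : IntermediateField ℚ ℝ)) : ℝ) * Complex.normSq (σ (β : _))
        ≤ ((β : (adjoin ℚ {c} : IntermediateField ℚ ℝ)) : ℝ) * Complex.normSq (σ (η : _)) :=
          mul_le_mul_of_nonneg_left (le_of_lt hβr) hβ0
      _ < ((η : (adjoin ℚ {c} : IntermediateField ℚ ℝ)) : ℝ) * Complex.normSq (σ (η : _)) :=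
          mul_lt_mul_of_pos_right hβh hnsη
  have hnβ0 : nβ = 0 := by
    have h1 : (0 : ℤ) ≤ nβ := by exact_mod_cast hb1
    have h2 : nβ < 1 := by exact_mod_cast hb2
    omega
  have hNβ0 : Algebra.norm ℚ (β : (adjoin ℚ {c} : IntermediateField ℚ ℝ)) = 0 := by
    rw [← hnβ, hnβ0]; norm_num
  have hβK : (β : (adjoin ℚ {c} : IntermediateField ℚ ℝ)) = 0 := by
    exact (Algebra.norm_eq_zero_iff).mp hNβ0
  exact Subtype.ext hβK

/-- Every positive unit of the ring of integers of a real pure cubic field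
`L = ℚ(∛d)` is a lattice minimum: no nonzero integer `β` of `L` satisfies
`0 ≤ β < η` and `0 ≤ β'β'' < η'η''` (here `β'β'' = |σβ|²` for the complex
embedding `σ`). -/
theorem stmt4 (d : ℤ) (hd : 1 < d) (hcf : ∀ p : ℤ, Prime p → ¬ (p ^ 3 ∣ d))
    (K : IntermediateField ℚ ℝ)
    (hK : K = IntermediateField.adjoin ℚ {((d : ℝ) ^ ((1 : ℝ) / 3))})
    (σ : K →ₐ[ℚ] ℂ) (hσ : ∃ x : K, (σ x).im ≠ 0)
    (η : integralClosure ℤ K) (hunit : IsUnit η) (hpos : (0 : ℝ) < ((η : K) : ℝ))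
    (β : integralClosure ℤ K)
    (hβ0 : (0 : ℝ) ≤ ((β : K) : ℝ)) (hβh : ((β : K) : ℝ) < ((η : K) : ℝ))
    (hβr : Complex.normSq (σ (β : K)) < Complex.normSq (σ (η : K))) :
    β = 0 := by
  subst hK
  have hd0 : (0 : ℝ) < (d : ℝ) := by exact_mod_cast lt_trans one_pos hd
  have hc3 : ((d : ℝ) ^ ((1 : ℝ) / 3)) ^ (3 : ℕ) = (d : ℝ) := by
    rw [← Real.rpow_natCast ((d:ℝ) ^ ((1:ℝ)/3)) 3, ← Real.rpow_mul hd0.le]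
    norm_num
  exact aux4 d hd hcf _ hc3 σ hσ η hunit hpos β hβ0 hβh hβr
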